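/- (Weber transformation lemma for the Lorentz force) Let u, B, Γ be smooth ℝ³-valued fields and ρ a smooth scalar field on ℝ × ℝ³ with ρ > 0 everywhere, and let μ₀ > 0 be a constant. Assume the Lagrange-multiplier evolution equation ∂Γ/∂t − u×(∇×Γ) + ∇(Γ·u) = −B/μ₀, Faraday's equation in the form ∂B/∂t − ∇×(u×B) + u(∇·B) = 0, and the mass continuity equation ∂ρ/∂t + ∇·(ρu) = 0. Then the vector field v = ((∇×Γ)×B)/ρ satisfies ∂v/∂t − u×(∇×v) + ∇(u·v) = −((∇×B)×B)/(μ₀ρ); i.e. the Lagrangian time derivative of the one-form ((∇×Γ)×B/ρ)·dx equals −((J×B)/ρ)·dx, where J = ∇×B/μ₀ is the current density. -/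

import Mathlib

noncomputable section

/-- Vectors in ℝ³. -/
abbrev Vec3 : Type := Fin 3 → ℝ

/-- Points of space-time: `(t, x)` with `t : ℝ`, `x : Fin 3 → ℝ`. -/
abbrev Pt : Type := ℝ × Vec3

/-- Euclidean dot product on ℝ³. -/
def dot3 (a b : Vec3) : ℝ := ∑ i, a i * b i

/-- Cross product on ℝ³. -/
def cross3 (a b : Vec3) : Vec3 :=
  ![a 1 * b 2 - a 2 * b 1, a 2 * b 0 - a 0 * b 2, a 0 * b 1 - a 1 * b 0]

/-- Spatial partial derivative ∂f/∂xᵢ of a scalar field. -/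
def pd (i : Fin 3) (f : Pt → ℝ) (p : Pt) : ℝ :=
  fderiv ℝ (fun x => f (p.1, x)) p.2 (Pi.single i 1)

/-- Time derivative ∂f/∂t of a scalar field. -/
def dt (f : Pt → ℝ) (p : Pt) : ℝ := deriv (fun s => f (s, p.2)) p.1

/-- Time derivative of a vector field, componentwise. -/
def dtVec (F : Pt → Vec3) (p : Pt) : Vec3 := fun i => dt (fun q => F q i) p

/-- Spatial gradient ∇f of a scalar field. -/
def grad3 (f : Pt → ℝ) (p : Pt) : Vec3 := fun i => pd i f p

/-- Spatial divergence ∇·F of a vector field. -/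
def div3 (F : Pt → Vec3) (p : Pt) : ℝ := ∑ i, pd i (fun q => F q i) p

/-- Spatial curl ∇×F of a vector field. -/
def curl3 (F : Pt → Vec3) (p : Pt) : Vec3 :=
  ![pd 1 (fun q => F q 2) p - pd 2 (fun q => F q 1) p,
    pd 2 (fun q => F q 0) p - pd 0 (fun q => F q 2) p,
    pd 0 (fun q => F q 1) p - pd 1 (fun q => F q 0) p]

/-- Directional derivative (u·∇)f of a scalar field. -/
def dirD (u : Pt → Vec3) (f : Pt → ℝ) (p : Pt) : ℝ := ∑ i, u p i * pd i f p

/-- Directional derivative (u·∇)F of a vector field. -/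
def dirDVec (u F : Pt → Vec3) (p : Pt) : Vec3 :=
  fun j => ∑ i, u p i * pd i (fun q => F q j) p

/-- (∇u)ᵀ·A, the vector with i-th component ∑ⱼ (∂uʲ/∂xⁱ) Aⱼ. -/
def gradTdot (u A : Pt → Vec3) (p : Pt) : Vec3 :=
  fun i => ∑ j, pd i (fun q => u q j) p * A p j

/-- A field is smooth when it is C^∞ jointly in time and space. -/
def SmoothS (f : Pt → ℝ) : Prop := ContDiff ℝ (⊤ : ℕ∞) f

/-- A vector field is smooth when it is C^∞ jointly in time and space. -/
def SmoothV (F : Pt → Vec3) : Prop := ContDiff ℝ (⊤ : ℕ∞) F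

/-!
Put `w = ∇×Γ` and `X = B/ρ`. Then `v = w × X`, and `v·dx` is the contraction `i_X (w·dS)` of
the flux two-form of `w` with the vector field `X`. The Lagrangian derivative `D = ∂ₜ + L_u`
obeys the Leibniz rule for contractions, `D (i_X β) = i_{DX} β + i_X (Dβ)`. Faraday's law and
mass conservation say that `B·dS` and `ρ d³x` are Lie-dragged, hence so is their quotient:
`DX = 0`. Since `D` commutes with the exterior derivative, `D(w·dS) = (∇×DΓ)·dS =
-(∇×B/μ₀)·dS`, whose contraction with `X` is `-(J×B/ρ)·dx`.
-/

lemma fderiv_fderiv_apply_comm {E F : Type*} [NormedAddCommGroup E] [NormedSpace ℝ E]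
    [NormedAddCommGroup F] [NormedSpace ℝ F] {f : E → F} (hf : ContDiff ℝ 2 f) (x v w : E) :
    fderiv ℝ (fun y => fderiv ℝ f y v) x w = fderiv ℝ (fun y => fderiv ℝ f y w) x v := by
  have hd : DifferentiableAt ℝ (fderiv ℝ f) x :=
    (hf.fderiv_right (m := 1) le_rfl).differentiable one_ne_zero x
  simp only [fderiv_clm_apply hd (differentiableAt_const _), fderiv_fun_const, Pi.zero_apply,
    ContinuousLinearMap.comp_zero, zero_add, ContinuousLinearMap.flip_apply]
  exact (hf.contDiffAt.isSymmSndFDerivAt (by simp)).eq w v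

section Calculus

variable {f g : Pt → ℝ} {p : Pt}

lemma pd_eq_fderiv (i : Fin 3) (hf : DifferentiableAt ℝ f p) :
    pd i f p = fderiv ℝ f p (0, Pi.single i 1) := by
  have h : HasFDerivAt (fun x => f (p.1, x)) ((fderiv ℝ f p).comp (.inr ℝ ℝ Vec3)) p.2 :=
    hf.hasFDerivAt.comp p.2 (hasFDerivAt_prodMk_right p.1 p.2)
  rw [pd, h.fderiv]
  rfl

lemma dt_eq_fderiv (hf : DifferentiableAt ℝ f p) : dt f p = fderiv ℝ f p (1, 0) :=
  (hf.hasFDerivAt.comp_hasDerivAt p.1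
    ((hasDerivAt_id p.1).prodMk (hasDerivAt_const p.1 p.2))).deriv

lemma pd_add (i : Fin 3) (hf : DifferentiableAt ℝ f p) (hg : DifferentiableAt ℝ g p) :
    pd i (fun q => f q + g q) p = pd i f p + pd i g p := by
  rw [pd_eq_fderiv i (hf.fun_add hg), fderiv_fun_add hf hg, pd_eq_fderiv i hf, pd_eq_fderiv i hg]
  rfl

lemma pd_sub (i : Fin 3) (hf : DifferentiableAt ℝ f p) (hg : DifferentiableAt ℝ g p) :
    pd i (fun q => f q - g q) p = pd i f p - pd i g p := by
  rw [pd_eq_fderiv i (hf.fun_sub hg), fderiv_fun_sub hf hg, pd_eq_fderiv i hf, pd_eq_fderiv i hg]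
  rfl

lemma pd_mul (i : Fin 3) (hf : DifferentiableAt ℝ f p) (hg : DifferentiableAt ℝ g p) :
    pd i (fun q => f q * g q) p = f p * pd i g p + pd i f p * g p := by
  rw [pd_eq_fderiv i (hf.fun_mul hg), fderiv_fun_mul hf hg, pd_eq_fderiv i hf, pd_eq_fderiv i hg]
  simp [mul_comm]

lemma pd_inv (i : Fin 3) (hf : DifferentiableAt ℝ f p) (h0 : f p ≠ 0) :
    pd i (fun q => (f q)⁻¹) p = -pd i f p / f p ^ 2 := by
  rw [pd_eq_fderiv i (hf.fun_inv h0),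
    fderiv_fun_comp p (differentiableAt_inv h0) hf, fderiv_inv, pd_eq_fderiv i hf]
  simp [div_eq_mul_inv]

lemma pd_const_mul (i : Fin 3) (c : ℝ) (hf : DifferentiableAt ℝ f p) :
    pd i (fun q => c * f q) p = c * pd i f p := by
  rw [pd_mul i (differentiableAt_const c) hf]
  simp [pd]

lemma dt_sub (hf : DifferentiableAt ℝ f p) (hg : DifferentiableAt ℝ g p) :
    dt (fun q => f q - g q) p = dt f p - dt g p := by
  rw [dt_eq_fderiv (hf.fun_sub hg), fderiv_fun_sub hf hg, dt_eq_fderiv hf, dt_eq_fderiv hg]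
  rfl

lemma dt_mul (hf : DifferentiableAt ℝ f p) (hg : DifferentiableAt ℝ g p) :
    dt (fun q => f q * g q) p = f p * dt g p + dt f p * g p := by
  rw [dt_eq_fderiv (hf.fun_mul hg), fderiv_fun_mul hf hg, dt_eq_fderiv hf, dt_eq_fderiv hg]
  simp [mul_comm]

lemma dt_inv (hf : DifferentiableAt ℝ f p) (h0 : f p ≠ 0) :
    dt (fun q => (f q)⁻¹) p = -dt f p / f p ^ 2 := by
  rw [dt_eq_fderiv (hf.fun_inv h0),
    fderiv_fun_comp p (differentiableAt_inv h0) hf, fderiv_inv, dt_eq_fderiv hf]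
  simp [div_eq_mul_inv]

lemma pd_eq_fun (i : Fin 3) (hf : Differentiable ℝ f) :
    pd i f = fun q => fderiv ℝ f q (0, Pi.single i 1) :=
  funext fun _ => pd_eq_fderiv i (hf _)

lemma dt_eq_fun (hf : Differentiable ℝ f) : dt f = fun q => fderiv ℝ f q (1, 0) :=
  funext fun _ => dt_eq_fderiv (hf _)

lemma contDiff_pd {n m : WithTop ℕ∞} (i : Fin 3) (hf : ContDiff ℝ n f) (hmn : m + 1 ≤ n) :
    ContDiff ℝ m (pd i f) := by
  rw [pd_eq_fun i ((hf.of_le (le_trans le_add_self hmn)).differentiable one_ne_zero)]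
  exact (hf.fderiv_right hmn).clm_apply contDiff_const

lemma contDiff_dt {n m : WithTop ℕ∞} (hf : ContDiff ℝ n f) (hmn : m + 1 ≤ n) :
    ContDiff ℝ m (dt f) := by
  rw [dt_eq_fun ((hf.of_le (le_trans le_add_self hmn)).differentiable one_ne_zero)]
  exact (hf.fderiv_right hmn).clm_apply contDiff_const

lemma pd_pd_comm (i j : Fin 3) (hf : ContDiff ℝ 2 f) : pd i (pd j f) p = pd j (pd i f) p := by
  have hf1 := hf.differentiable two_ne_zero
  rw [pd_eq_fderiv i ((contDiff_pd j hf (m := 1) le_rfl).differentiable one_ne_zero p),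
    pd_eq_fderiv j ((contDiff_pd i hf (m := 1) le_rfl).differentiable one_ne_zero p),
    pd_eq_fun i hf1, pd_eq_fun j hf1, fderiv_fderiv_apply_comm hf]

lemma dt_pd_comm (i : Fin 3) (hf : ContDiff ℝ 2 f) : dt (pd i f) p = pd i (dt f) p := by
  have hf1 := hf.differentiable two_ne_zero
  rw [dt_eq_fderiv ((contDiff_pd i hf (m := 1) le_rfl).differentiable one_ne_zero p),
    pd_eq_fderiv i ((contDiff_dt hf (m := 1) le_rfl).differentiable one_ne_zero p),
    pd_eq_fun i hf1, dt_eq_fun hf1, fderiv_fderiv_apply_comm hf]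

end Calculus

section VectorCalculus

variable {f : Pt → ℝ} {F G : Pt → Vec3} {p : Pt}

open Matrix in
lemma cross3_eq_crossProduct (a b : Vec3) : cross3 a b = a ⨯₃ b := rfl

lemma differentiable_pd (i : Fin 3) (hf : ContDiff ℝ 2 f) : Differentiable ℝ (pd i f) :=
  (contDiff_pd i hf (m := 1) le_rfl).differentiable one_ne_zero

lemma differentiable_dt (hf : ContDiff ℝ 2 f) : Differentiable ℝ (dt f) :=
  (contDiff_dt hf (m := 1) le_rfl).differentiable one_ne_zero

lemma curl3_add (hF : DifferentiableAt ℝ F p) (hG : DifferentiableAt ℝ G p) :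
    curl3 (F + G) p = curl3 F p + curl3 G p := by
  have hF' := differentiableAt_pi.1 hF
  have hG' := differentiableAt_pi.1 hG
  ext j
  fin_cases j <;>
  · simp only [curl3, Pi.add_apply, pd_add _ (hF' _) (hG' _)]
    simp
    ring

lemma curl3_sub (hF : DifferentiableAt ℝ F p) (hG : DifferentiableAt ℝ G p) :
    curl3 (F - G) p = curl3 F p - curl3 G p := by
  have hF' := differentiableAt_pi.1 hF
  have hG' := differentiableAt_pi.1 hG
  ext j
  fin_cases j <;>
  · simp only [curl3, Pi.sub_apply, pd_sub _ (hF' _) (hG' _)]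
    simp
    ring

lemma curl3_const_smul (c : ℝ) (hF : DifferentiableAt ℝ F p) :
    curl3 (fun q => c • F q) p = c • curl3 F p := by
  have hF' := differentiableAt_pi.1 hF
  ext j
  fin_cases j <;>
  · simp [curl3, pd_const_mul _ c (hF' _), mul_sub]

lemma curl3_grad3 (hf : ContDiff ℝ 2 f) : curl3 (grad3 f) p = 0 := by
  ext j
  fin_cases j <;> simp [curl3, grad3, pd_pd_comm _ _ hf]

lemma div3_curl3 (hF : ContDiff ℝ 2 F) : div3 (curl3 F) p = 0 := by
  have hF' : ∀ i, ContDiff ℝ 2 (fun q => F q i) := contDiff_pi.1 hF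
  simp only [div3, curl3, Fin.sum_univ_three, Matrix.cons_val_zero, Matrix.cons_val_one,
    Matrix.cons_val_two, Matrix.head_cons, Matrix.tail_cons]
  simp (disch := exact (differentiable_pd _ (hF' _)).differentiableAt) only [pd_sub]
  rw [pd_pd_comm 0 1 (hF' 2), pd_pd_comm 0 2 (hF' 1), pd_pd_comm 1 2 (hF' 0)]
  ring

lemma curl3_dtVec (hF : ContDiff ℝ 2 F) : curl3 (dtVec F) p = dtVec (curl3 F) p := by
  have hF' : ∀ i, ContDiff ℝ 2 (fun q => F q i) := contDiff_pi.1 hF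
  ext j
  fin_cases j <;>
  · simp only [curl3, dtVec, Fin.zero_eta, Fin.mk_one, Fin.reduceFinMk, Matrix.cons_val_zero,
      Matrix.cons_val_one, Matrix.cons_val_two, Matrix.head_cons, Matrix.tail_cons]
    simp (disch := exact (differentiable_pd _ (hF' _)).differentiableAt) only
      [dt_sub, dt_pd_comm _ (hF' _)]

lemma differentiable_curl3 (hF : ContDiff ℝ 2 F) : Differentiable ℝ (curl3 F) := by
  have hF' : ∀ i, ContDiff ℝ 2 (fun q => F q i) := contDiff_pi.1 hF
  refine differentiable_pi.2 fun j => ?_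
  fin_cases j <;>
  · simp only [curl3, Fin.zero_eta, Fin.mk_one, Fin.reduceFinMk, Matrix.cons_val_zero,
      Matrix.cons_val_one, Matrix.cons_val_two, Matrix.head_cons, Matrix.tail_cons]
    exact (differentiable_pd _ (hF' _)).fun_sub (differentiable_pd _ (hF' _))

lemma differentiable_dtVec (hF : ContDiff ℝ 2 F) : Differentiable ℝ (dtVec F) :=
  differentiable_pi.2 fun j => differentiable_dt (contDiff_pi.1 hF j)

lemma differentiable_grad3 (hf : ContDiff ℝ 2 f) : Differentiable ℝ (grad3 f) :=
  differentiable_pi.2 fun j => differentiable_pd j hf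

lemma DifferentiableAt.cross3 (hF : DifferentiableAt ℝ F p) (hG : DifferentiableAt ℝ G p) :
    DifferentiableAt ℝ (fun q => cross3 (F q) (G q)) p := by
  have hF' := differentiableAt_pi.1 hF
  have hG' := differentiableAt_pi.1 hG
  refine differentiableAt_pi.2 fun j => ?_
  fin_cases j <;>
  · simp only [_root_.cross3, Fin.zero_eta, Fin.mk_one, Fin.reduceFinMk, Matrix.cons_val_zero,
      Matrix.cons_val_one, Matrix.cons_val_two, Matrix.head_cons, Matrix.tail_cons]
    fun_prop

end VectorCalculus

/- `∂ₜ + L_u` acting on a one-form `v·dx`, a two-form `w·dS` and a vector field `X`,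
written in vector calculus. -/
def lagrangianDerivOneForm (u v : Pt → Vec3) (p : Pt) : Vec3 :=
  dtVec v p - cross3 (u p) (curl3 v p) + grad3 (fun q => dot3 (u q) (v q)) p

def lagrangianDerivTwoForm (u w : Pt → Vec3) (p : Pt) : Vec3 :=
  dtVec w p - curl3 (fun q => cross3 (u q) (w q)) p + div3 w p • u p

def lagrangianDerivVectorField (u X : Pt → Vec3) (p : Pt) : Vec3 :=
  dtVec X p + dirDVec u X p - dirDVec X u p

section LagrangianDeriv

variable {u w X B : Pt → Vec3} {ρ : Pt → ℝ} {p : Pt}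

theorem lagrangianDerivOneForm_cross (hu : DifferentiableAt ℝ u p)
    (hw : DifferentiableAt ℝ w p) (hX : DifferentiableAt ℝ X p) :
    lagrangianDerivOneForm u (fun q => cross3 (w q) (X q)) p
      = cross3 (lagrangianDerivTwoForm u w p) (X p)
        + cross3 (w p) (lagrangianDerivVectorField u X p) := by
  have hu' := differentiableAt_pi.1 hu
  have hw' := differentiableAt_pi.1 hw
  have hX' := differentiableAt_pi.1 hX
  ext j
  fin_cases j <;>
  · simp only [lagrangianDerivOneForm, lagrangianDerivTwoForm, lagrangianDerivVectorField,
      dtVec, curl3, grad3, div3, dirDVec, dot3, cross3, Fin.sum_univ_three, Pi.add_apply,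
      Pi.sub_apply, Pi.smul_apply, smul_eq_mul, Fin.zero_eta, Fin.mk_one, Fin.reduceFinMk,
      Matrix.cons_val_zero, Matrix.cons_val_one, Matrix.cons_val_two, Matrix.head_cons,
      Matrix.tail_cons]
    simp (disch := fun_prop) only [pd_add, pd_sub, pd_mul, dt_sub, dt_mul]
    ring

theorem lagrangianDerivVectorField_inv_smul (hu : DifferentiableAt ℝ u p)
    (hB : DifferentiableAt ℝ B p) (hρ : DifferentiableAt ℝ ρ p) (hρ0 : ρ p ≠ 0) :
    lagrangianDerivVectorField u (fun q => (ρ q)⁻¹ • B q) p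
      = (ρ p)⁻¹ • lagrangianDerivTwoForm u B p
        - ((dt ρ p + div3 (fun q => ρ q • u q) p) / ρ p ^ 2) • B p := by
  have hu' := differentiableAt_pi.1 hu
  have hB' := differentiableAt_pi.1 hB
  ext j
  fin_cases j <;>
  · simp only [lagrangianDerivTwoForm, lagrangianDerivVectorField,
      dtVec, curl3, div3, dirDVec, cross3, Fin.sum_univ_three, Pi.add_apply,
      Pi.sub_apply, Pi.smul_apply, smul_eq_mul, Fin.zero_eta, Fin.mk_one, Fin.reduceFinMk,
      Matrix.cons_val_zero, Matrix.cons_val_one, Matrix.cons_val_two, Matrix.head_cons,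
      Matrix.tail_cons]
    simp (disch := fun_prop (disch := exact hρ0)) only [pd_sub, pd_mul, dt_mul, pd_inv _ hρ hρ0,
      dt_inv hρ hρ0]
    field_simp
    ring

theorem lagrangianDerivTwoForm_curl3 {Γ : Pt → Vec3} (hu : ContDiff ℝ 2 u)
    (hΓ : ContDiff ℝ 2 Γ) :
    lagrangianDerivTwoForm u (curl3 Γ) p = curl3 (lagrangianDerivOneForm u Γ) p := by
  have hdot : ContDiff ℝ 2 (fun q => dot3 (u q) (Γ q)) := by
    simp only [dot3, Fin.sum_univ_three]
    fun_prop
  have hcross : DifferentiableAt ℝ (fun q => cross3 (u q) (curl3 Γ q)) p :=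
    (hu.differentiable two_ne_zero p).cross3 (differentiable_curl3 hΓ p)
  have hdef : lagrangianDerivOneForm u Γ = dtVec Γ - (fun q => cross3 (u q) (curl3 Γ q))
      + grad3 (fun q => dot3 (u q) (Γ q)) := rfl
  rw [hdef, curl3_add ((differentiable_dtVec hΓ p).sub hcross) (differentiable_grad3 hdot p),
    curl3_sub (differentiable_dtVec hΓ p) hcross, curl3_dtVec hΓ, curl3_grad3 hdot,
    lagrangianDerivTwoForm, div3_curl3 hΓ, zero_smul, add_zero]

end LagrangianDeriv

theorem weber_lorentz_force_lemma_general
    (u B Γ : Pt → Vec3) (ρ : Pt → ℝ) (μ₀ : ℝ)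
    (hu : SmoothV u) (hB : SmoothV B) (hΓ : SmoothV Γ) (hρ : SmoothS ρ)
    (hρpos : ∀ p : Pt, 0 < ρ p)
    (hΓev : ∀ p : Pt,
      dtVec Γ p - cross3 (u p) (curl3 Γ p)
        + grad3 (fun q => dot3 (Γ q) (u q)) p = -(μ₀⁻¹) • B p)
    (hfar : ∀ p : Pt,
      dtVec B p - curl3 (fun q => cross3 (u q) (B q)) p
        + div3 B p • u p = 0)
    (hcont : ∀ p : Pt, dt ρ p + div3 (fun q => ρ q • u q) p = 0) :
    ∀ p : Pt,
      dtVec (fun q => (ρ q)⁻¹ • cross3 (curl3 Γ q) (B q)) p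
        - cross3 (u p)
            (curl3 (fun q => (ρ q)⁻¹ • cross3 (curl3 Γ q) (B q)) p)
        + grad3
            (fun q => dot3 (u q) ((ρ q)⁻¹ • cross3 (curl3 Γ q) (B q))) p
        = -((μ₀ * ρ p)⁻¹) • cross3 (curl3 B p) (B p) := by
  intro p
  have hu2 : ContDiff ℝ 2 u := ContDiff.of_le hu (by norm_cast)
  have hΓ2 : ContDiff ℝ 2 Γ := ContDiff.of_le hΓ (by norm_cast)
  have hud : DifferentiableAt ℝ u p := hu2.differentiable two_ne_zero p
  have hBd : Differentiable ℝ B := ContDiff.differentiable hB (by simp)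
  have hρd : Differentiable ℝ ρ := ContDiff.differentiable hρ (by simp)
  have hρ0 : ρ p ≠ 0 := (hρpos p).ne'
  have hDΓ : lagrangianDerivOneForm u Γ = fun q => -(μ₀⁻¹) • B q := funext fun q => by
    simpa only [lagrangianDerivOneForm, dot3, mul_comm] using hΓev q
  have hDw : lagrangianDerivTwoForm u (curl3 Γ) p = -(μ₀⁻¹) • curl3 B p := by
    rw [lagrangianDerivTwoForm_curl3 hu2 hΓ2, hDΓ, curl3_const_smul _ (hBd p)]
  have hDX : lagrangianDerivVectorField u (fun q => (ρ q)⁻¹ • B q) p = 0 := by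
    rw [lagrangianDerivVectorField_inv_smul hud (hBd p) (hρd p) hρ0, lagrangianDerivTwoForm,
      hfar, hcont, zero_div, zero_smul, smul_zero, sub_zero]
  have hv : (fun q => (ρ q)⁻¹ • cross3 (curl3 Γ q) (B q))
      = fun q => cross3 (curl3 Γ q) ((ρ q)⁻¹ • B q) := by
    simp only [cross3_eq_crossProduct, map_smul]
  change lagrangianDerivOneForm u (fun q => (ρ q)⁻¹ • cross3 (curl3 Γ q) (B q)) p = _
  rw [hv, lagrangianDerivOneForm_cross hud (differentiable_curl3 hΓ2 p)
    (((hρd p).fun_inv hρ0).fun_smul (hBd p)), hDw, hDX]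
  simp [cross3_eq_crossProduct, smul_smul]

/-- Weber transformation lemma for the Lorentz force: the
    Lie-dragging derivative of the one-form ((∇×Γ)×B/ρ)·dx equals
    −((J×B)/ρ)·dx with J = ∇×B/μ₀. -/
theorem weber_lorentz_force_lemma
    (u B Γ : Pt → Vec3) (ρ : Pt → ℝ) (μ₀ : ℝ)
    (hu : SmoothV u) (hB : SmoothV B) (hΓ : SmoothV Γ) (hρ : SmoothS ρ)
    (hρpos : ∀ p : Pt, 0 < ρ p) (hμ₀ : 0 < μ₀)
    (hΓev : ∀ p : Pt,
      dtVec Γ p - cross3 (u p) (curl3 Γ p)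
        + grad3 (fun q => dot3 (Γ q) (u q)) p = -(μ₀⁻¹) • B p)
    (hfar : ∀ p : Pt,
      dtVec B p - curl3 (fun q => cross3 (u q) (B q)) p
        + div3 B p • u p = 0)
    (hcont : ∀ p : Pt, dt ρ p + div3 (fun q => ρ q • u q) p = 0) :
    ∀ p : Pt,
      dtVec (fun q => (ρ q)⁻¹ • cross3 (curl3 Γ q) (B q)) p
        - cross3 (u p)
            (curl3 (fun q => (ρ q)⁻¹ • cross3 (curl3 Γ q) (B q)) p)
        + grad3
            (fun q => dot3 (u q) ((ρ q)⁻¹ • cross3 (curl3 Γ q) (B q))) p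
        = -((μ₀ * ρ p)⁻¹) • cross3 (curl3 B p) (B p) :=
  weber_lorentz_force_lemma_general u B Γ ρ μ₀ hu hB hΓ hρ hρpos hΓev hfar hcont
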